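/- Let 1 < m ≤ 2 and consider the unbounded model domain U_m = {(z₁, z₂) ∈ ℂ² : 2 Im z₂ > |Re z₁|^m}, with defining function ρ(z) = |Re z₁|^m − 2 Im z₂, whose boundary is parametrized by Φ : ℝ³ → ℂ², Φ(x, y, t) = (x + iy, t + (i/2)|x|^m). For w = Φ(x, y, t) and z = Φ(x', y', t') one has ⟨∂ρ(w), w − z⟩ = (m/2)|x|^{m−1} sgn(x) · (w₁ − z₁) + i (w₂ − z₂). Define, for compactly supported continuous g : ℝ³ → ℂ and points ζ ∈ ℝ³ at positive distance from the support of g, T g(ζ) = ∫_{ℝ³} g(x, y, t) · ⟨∂ρ(Φ(x, y, t)), Φ(x, y, t) − Φ(ζ)⟩^{−2} dx dy dt. Then for every p with 1 < p < ∞ there is NO constant A > 0 such that (∫_S |T g|ᵖ)^{1/p} ≤ A (∫_{ℝ³} |g|ᵖ)^{1/p} holds for every compactly supported continuous g : ℝ³ → ℂ and every Borel set S ⊂ ℝ³ at positive distance from the support of g. -/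

import Mathlib

open MeasureTheory Complex

noncomputable section

/-- Parametrization `Φ(x, y, t) = (x + iy, t + (i/2)|x|^m)` of the boundary of the model
domain `U_m = {2 Im z₂ > |Re z₁|^m}`. -/
def PhiM (m : ℝ) (ξ : ℝ × ℝ × ℝ) : ℂ × ℂ :=
  ((ξ.1 : ℂ) + (ξ.2.1 : ℂ) * Complex.I, (ξ.2.2 : ℂ) + (Complex.I / 2) * ((|ξ.1| ^ m : ℝ) : ℂ))

/-- The pairing `⟨∂ρ(Φ ξ), Φ ξ − Φ ζ⟩ = (m/2)|x|^{m−1} sgn(x)(w₁ − z₁) + i(w₂ − z₂)`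
for the defining function `ρ(z) = |Re z₁|^m − 2 Im z₂` of `U_m`. -/
def pairM (m : ℝ) (ξ ζ : ℝ × ℝ × ℝ) : ℂ :=
  (((m / 2) * |ξ.1| ^ (m - 1) * Real.sign ξ.1 : ℝ) : ℂ) * ((PhiM m ξ).1 - (PhiM m ζ).1)
    + Complex.I * ((PhiM m ξ).2 - (PhiM m ζ).2)

/-- The Cauchy–Leray-type singular integral operator of the model domain `U_m`. -/
def TM (m : ℝ) (g : ℝ × ℝ × ℝ → ℂ) (ζ : ℝ × ℝ × ℝ) : ℂ :=
  ∫ ξ, g ξ / (pairM m ξ ζ) ^ 2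

/-! Let `L = R^m / 100`, let `0 ≤ g ≤ 1` be continuous, equal to `1` on a box of size
`1 × L/2 × L/2` and supported in `[-1, 1] × [0, L]²`, and let `S = [R, 2R] × [0, L]²`.
For `ξ ∈ supp g` and `ζ ∈ S` the real part of the pairing is `|ζ₁|^m / 2 + O(R) ≍ R^m`
(this needs `m > 1`) and its imaginary part is `O(L)`, so on `S` we get
`Re T g ≳ L² / R^{2m}`, an absolute constant. Hence `∫_S |T g|^p ≳ R L²` while
`∫ |g|^p ≲ L²`, and letting `R → ∞` rules out any bound. -/

open Set Filter

@[fun_prop]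
lemma Real.measurable_sign : Measurable Real.sign := by
  refine Monotone.measurable fun a b hab => ?_
  rcases lt_trichotomy a 0 with ha | ha | ha <;> rcases lt_trichotomy b 0 with hb | hb | hb <;>
    simp [Real.sign_of_neg, Real.sign_of_pos, Real.sign_zero, *] <;> linarith

lemma Real.abs_sign_le_one (x : ℝ) : |Real.sign x| ≤ 1 := by
  rcases Real.sign_apply_eq x with h | h | h <;> simp [h]

lemma Complex.one_div_two_mul_re_sq_le_re_inv_sq {z : ℂ} (hz : 3 * |z.im| ≤ z.re) :
    1 / (2 * z.re ^ 2) ≤ ((z ^ 2)⁻¹).re := by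
  rw [Complex.inv_re, map_pow, Complex.normSq_apply, pow_two z, Complex.mul_re]
  have him : z.im ^ 2 ≤ z.re ^ 2 / 9 := by nlinarith [sq_abs z.im, abs_nonneg z.im]
  rcases (show 0 ≤ z.re by linarith [abs_nonneg z.im]).eq_or_lt with hre | hre
  · have : z.im = 0 := by nlinarith
    simp [← hre, this]
  rw [div_le_div_iff₀ (by positivity) (pow_pos (by nlinarith) 2)]
  nlinarith

lemma Complex.norm_inv_sq_le {z : ℂ} (hz : 0 < z.re) : ‖(z ^ 2)⁻¹‖ ≤ (z.re ^ 2)⁻¹ := by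
  rw [norm_inv, norm_pow]
  exact inv_anti₀ (by positivity) (pow_le_pow_left₀ hz.le (Complex.re_le_norm z) 2)

lemma volume_Icc_prod_Icc_prod_Icc {a₁ b₁ a₂ b₂ a₃ b₃ : ℝ} (h₁ : a₁ ≤ b₁) (h₂ : a₂ ≤ b₂) :
    volume (Icc a₁ b₁ ×ˢ Icc a₂ b₂ ×ˢ Icc a₃ b₃) =
      ENNReal.ofReal ((b₁ - a₁) * (b₂ - a₂) * (b₃ - a₃)) := by
  rw [Measure.volume_eq_prod, Measure.prod_prod, Measure.volume_eq_prod, Measure.prod_prod,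
    Real.volume_Icc, Real.volume_Icc, Real.volume_Icc, ← ENNReal.ofReal_mul (sub_nonneg.2 h₂),
    ← ENNReal.ofReal_mul (sub_nonneg.2 h₁), mul_assoc]

section Integrals

variable {α : Type*} [MeasurableSpace α] {μ : Measure α} {K₀ K : Set α}

lemma mul_measureReal_le_re_integral_ofReal_mul {f : α → ℝ} {k : α → ℂ} {a b : ℝ}
    (hK : MeasurableSet K) (hKμ : μ K ≠ ⊤) (hK₀ : MeasurableSet K₀) (hK₀K : K₀ ⊆ K)
    (hf : Measurable f) (hk : Measurable k) (hf01 : ∀ x, f x ∈ Icc 0 1) (hf1 : EqOn f 1 K₀)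
    (hf0 : ∀ x ∉ K, f x = 0) (ha0 : 0 ≤ a) (ha : ∀ x ∈ K, a ≤ (k x).re)
    (hb : ∀ x ∈ K, ‖k x‖ ≤ b) :
    a * μ.real K₀ ≤ (∫ x, (f x : ℂ) * k x ∂μ).re := by
  have hint : Integrable (fun x => (f x : ℂ) * k x) μ := by
    refine IntegrableOn.integrable_of_forall_notMem_eq_zero (s := K) ?_
      fun x hx => by simp [hf0 x hx]
    refine Measure.integrableOn_of_bounded (M := b) hKμ
      ((Complex.measurable_ofReal.comp hf).mul hk).aestronglyMeasurable ?_
    filter_upwards [ae_restrict_mem hK] with x hx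
    rw [norm_mul, Complex.norm_real, Real.norm_of_nonneg (hf01 x).1]
    exact (mul_le_of_le_one_left (norm_nonneg _) (hf01 x).2).trans (hb x hx)
  have hpt : ∀ x, K₀.indicator (fun _ => a) x ≤ ((f x : ℂ) * k x).re := by
    intro x
    rw [Complex.re_ofReal_mul]
    by_cases hx₀ : x ∈ K₀
    · rw [indicator_of_mem hx₀, hf1 hx₀, Pi.one_apply, one_mul]
      exact ha x (hK₀K hx₀)
    rw [indicator_of_notMem hx₀]
    by_cases hx : x ∈ K
    · exact mul_nonneg (hf01 x).1 (ha0.trans (ha x hx))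
    · simp [hf0 x hx]
  have hK₀μ : μ K₀ ≠ ⊤ := ne_top_of_le_ne_top hKμ (measure_mono hK₀K)
  calc a * μ.real K₀ = ∫ x, K₀.indicator (fun _ => a) x ∂μ := by
        rw [integral_indicator_const _ hK₀, smul_eq_mul, mul_comm]
    _ ≤ ∫ x, ((f x : ℂ) * k x).re ∂μ :=
        integral_mono ((integrableOn_const hK₀μ).integrable_indicator hK₀) hint.re hpt
    _ = (∫ x, (f x : ℂ) * k x ∂μ).re := integral_re hint

lemma ofReal_rpow_mul_le_setLIntegral_nnnorm_rpow {E : Type*} [NormedAddCommGroup E]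
    {F : α → E} {c p : ℝ} (hK : MeasurableSet K) (hp : 0 ≤ p) (hc : ∀ x ∈ K, c ≤ ‖F x‖) :
    ENNReal.ofReal c ^ p * μ K ≤ ∫⁻ x in K, (‖F x‖₊ : ENNReal) ^ p ∂μ := by
  rw [← setLIntegral_const]
  refine setLIntegral_mono' hK fun x hx => ENNReal.rpow_le_rpow ?_ hp
  rw [← enorm_eq_nnnorm, ← ofReal_norm]
  exact ENNReal.ofReal_le_ofReal (hc x hx)

lemma lintegral_nnnorm_rpow_le_measure {E : Type*} [NormedAddCommGroup E] {F : α → E} {p : ℝ}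
    (hK : MeasurableSet K) (hp : 0 < p) (hF1 : ∀ x, ‖F x‖ ≤ 1) (hF0 : ∀ x ∉ K, F x = 0) :
    ∫⁻ x, (‖F x‖₊ : ENNReal) ^ p ∂μ ≤ μ K := by
  rw [← lintegral_indicator_one hK]
  refine lintegral_mono fun x => ?_
  by_cases hx : x ∈ K
  · rw [indicator_of_mem hx, Pi.one_apply]
    refine ENNReal.rpow_le_one ?_ hp.le
    rw [← enorm_eq_nnnorm, ← ofReal_norm]
    exact ENNReal.ofReal_le_one.2 (hF1 x)
  · simp [hF0 x hx, ENNReal.zero_rpow_of_pos hp]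

end Integrals

def supportBox (L : ℝ) : Set (ℝ × ℝ × ℝ) := Icc (-1) 1 ×ˢ Icc 0 L ×ˢ Icc 0 L

def coreBox (L : ℝ) : Set (ℝ × ℝ × ℝ) :=
  Icc (-(1 / 2)) (1 / 2) ×ˢ Icc (L / 4) (3 * L / 4) ×ˢ Icc (L / 4) (3 * L / 4)

def farBox (R L : ℝ) : Set (ℝ × ℝ × ℝ) := Icc R (2 * R) ×ˢ Icc 0 L ×ˢ Icc 0 L

lemma measurableSet_supportBox (L : ℝ) : MeasurableSet (supportBox L) :=
  measurableSet_Icc.prod (measurableSet_Icc.prod measurableSet_Icc)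

lemma measurableSet_coreBox (L : ℝ) : MeasurableSet (coreBox L) :=
  measurableSet_Icc.prod (measurableSet_Icc.prod measurableSet_Icc)

lemma measurableSet_farBox (R L : ℝ) : MeasurableSet (farBox R L) :=
  measurableSet_Icc.prod (measurableSet_Icc.prod measurableSet_Icc)

lemma isCompact_supportBox (L : ℝ) : IsCompact (supportBox L) :=
  isCompact_Icc.prod (isCompact_Icc.prod isCompact_Icc)

lemma coreBox_subset_supportBox {L : ℝ} (hL : 0 ≤ L) : coreBox L ⊆ supportBox L :=
  prod_mono (Icc_subset_Icc (by norm_num) (by norm_num))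
    (prod_mono (Icc_subset_Icc (by linarith) (by linarith))
      (Icc_subset_Icc (by linarith) (by linarith)))

lemma volume_supportBox {L : ℝ} (hL : 0 ≤ L) :
    volume (supportBox L) = ENNReal.ofReal (2 * L * L) := by
  rw [supportBox, volume_Icc_prod_Icc_prod_Icc (by norm_num) hL]
  norm_num

lemma volume_farBox {R L : ℝ} (hR : 0 ≤ R) (hL : 0 ≤ L) :
    volume (farBox R L) = ENNReal.ofReal (R * L * L) := by
  rw [farBox, volume_Icc_prod_Icc_prod_Icc (by linarith) hL]
  ring_nf

lemma measureReal_coreBox {L : ℝ} (hL : 0 ≤ L) :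
    volume.real (coreBox L) = L / 2 * (L / 2) := by
  rw [measureReal_def, coreBox, volume_Icc_prod_Icc_prod_Icc (by norm_num) (by linarith),
    ENNReal.toReal_ofReal (by nlinarith)]
  ring

lemma one_le_dist_of_mem_farBox {R L : ℝ} (hR : 2 ≤ R) {ζ ξ : ℝ × ℝ × ℝ}
    (hζ : ζ ∈ farBox R L) (hξ : ξ ∈ supportBox L) : 1 ≤ dist ζ ξ := by
  have hζ₁ := hζ.1.1
  have hξ₁ := hξ.1.2
  calc (1 : ℝ) ≤ dist ζ.1 ξ.1 := by rw [Real.dist_eq, le_abs]; left; linarith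
    _ ≤ dist ζ ξ := by rw [Prod.dist_eq]; exact le_max_left _ _

lemma exists_plateau {L : ℝ} (hL : 0 < L) :
    ∃ f : ℝ × ℝ × ℝ → ℝ, Continuous f ∧ EqOn f 1 (coreBox L) ∧
      (∀ ξ ∉ supportBox L, f ξ = 0) ∧ ∀ ξ, f ξ ∈ Icc 0 1 := by
  set U : Set (ℝ × ℝ × ℝ) := Ioo (-1) 1 ×ˢ Ioo 0 L ×ˢ Ioo 0 L
  have hU : IsOpen U := isOpen_Ioo.prod (isOpen_Ioo.prod isOpen_Ioo)
  have hcore : coreBox L ⊆ U :=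
    prod_mono (Icc_subset_Ioo (by norm_num) (by norm_num))
      (prod_mono (Icc_subset_Ioo (by linarith) (by linarith))
        (Icc_subset_Ioo (by linarith) (by linarith)))
  have hcompact : IsCompact (coreBox L) := isCompact_Icc.prod (isCompact_Icc.prod isCompact_Icc)
  obtain ⟨f, hf1, hf0, -, hf01⟩ := exists_continuous_one_zero_of_isCompact hcompact
    hU.isClosed_compl (disjoint_compl_right_iff_subset.2 hcore)
  refine ⟨f, f.continuous, hf1, fun ξ hξ => hf0 fun hξU => hξ ?_, hf01⟩
  exact Set.prod_mono Ioo_subset_Icc_self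
    (Set.prod_mono Ioo_subset_Icc_self Ioo_subset_Icc_self) hξU

section Pairing

variable {m : ℝ}

lemma measurable_pairM_left (ζ : ℝ × ℝ × ℝ) : Measurable fun ξ => pairM m ξ ζ := by
  unfold pairM PhiM
  fun_prop

lemma re_pairM (ξ ζ : ℝ × ℝ × ℝ) :
    (pairM m ξ ζ).re = (m / 2 * |ξ.1| ^ (m - 1) * Real.sign ξ.1) * (ξ.1 - ζ.1)
      + (|ζ.1| ^ m - |ξ.1| ^ m) / 2 := by
  simp [pairM, PhiM]
  ring

lemma im_pairM (ξ ζ : ℝ × ℝ × ℝ) :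
    (pairM m ξ ζ).im = (m / 2 * |ξ.1| ^ (m - 1) * Real.sign ξ.1) * (ξ.2.1 - ζ.2.1)
      + (ξ.2.2 - ζ.2.2) := by
  simp [pairM, PhiM]

lemma abs_pairM_coeff_le_one (hm1 : 1 ≤ m) (hm2 : m ≤ 2) {x : ℝ} (hx : |x| ≤ 1) :
    |m / 2 * |x| ^ (m - 1) * Real.sign x| ≤ 1 := by
  have hpow₀ : 0 ≤ |x| ^ (m - 1) := Real.rpow_nonneg (abs_nonneg x) _
  rw [abs_mul, abs_mul, abs_of_nonneg (by linarith : 0 ≤ m / 2), abs_of_nonneg hpow₀]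
  exact mul_le_one₀ (mul_le_one₀ (by linarith) hpow₀
    (Real.rpow_le_one (abs_nonneg x) hx (by linarith))) (abs_nonneg _) (Real.abs_sign_le_one x)

lemma pairM_bounds (hm1 : 1 ≤ m) (hm2 : m ≤ 2) {R : ℝ} (hR1 : 1 ≤ R) (hR : 40 * R ≤ R ^ m)
    {ξ ζ : ℝ × ℝ × ℝ} (hξ : ξ ∈ supportBox (R ^ m / 100)) (hζ : ζ ∈ farBox R (R ^ m / 100)) :
    R ^ m / 3 ≤ (pairM m ξ ζ).re ∧ (pairM m ξ ζ).re ≤ 3 * R ^ m ∧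
      3 * |(pairM m ξ ζ).im| ≤ (pairM m ξ ζ).re := by
  obtain ⟨⟨hx₀, hx₁⟩, ⟨hy₀, hy₁⟩, ⟨ht₀, ht₁⟩⟩ := hξ
  obtain ⟨⟨hx₀', hx₁'⟩, ⟨hy₀', hy₁'⟩, ⟨ht₀', ht₁'⟩⟩ := hζ
  rw [re_pairM, im_pairM]
  set C := m / 2 * |ξ.1| ^ (m - 1) * Real.sign ξ.1
  have hx : |ξ.1| ≤ 1 := abs_le.2 ⟨hx₀, hx₁⟩
  have hC (u : ℝ) : |C * u| ≤ |u| := by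
    rw [abs_mul]
    exact mul_le_of_le_one_left (abs_nonneg u) (abs_pairM_coeff_le_one hm1 hm2 hx)
  have hξm : |ξ.1| ^ m ∈ Icc 0 1 :=
    ⟨Real.rpow_nonneg (abs_nonneg _) m, Real.rpow_le_one (abs_nonneg _) hx (by linarith)⟩
  have hζm : |ζ.1| ^ m ∈ Icc (R ^ m) (4 * R ^ m) := by
    rw [abs_of_nonneg (by linarith)]
    refine ⟨Real.rpow_le_rpow (by linarith) hx₀' (by linarith), ?_⟩
    calc ζ.1 ^ m ≤ (2 * R) ^ m := Real.rpow_le_rpow (by linarith) hx₁' (by linarith)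
      _ = 2 ^ m * R ^ m := Real.mul_rpow zero_le_two (by linarith)
      _ ≤ 2 ^ (2 : ℝ) * R ^ m := by gcongr; norm_num
      _ = 4 * R ^ m := by norm_num
  have hdx : |C * (ξ.1 - ζ.1)| ≤ 2 * R + 1 :=
    (hC _).trans (abs_le.2 ⟨by linarith, by linarith⟩)
  have hdy : |C * (ξ.2.1 - ζ.2.1)| ≤ R ^ m / 100 :=
    (hC _).trans (abs_le.2 ⟨by linarith, by linarith⟩)
  have hdt : |ξ.2.2 - ζ.2.2| ≤ R ^ m / 100 := abs_le.2 ⟨by linarith, by linarith⟩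
  have him : |C * (ξ.2.1 - ζ.2.1) + (ξ.2.2 - ζ.2.2)| ≤ R ^ m / 50 := by
    linarith [abs_add_le (C * (ξ.2.1 - ζ.2.1)) (ξ.2.2 - ζ.2.2)]
  obtain ⟨hdx₀, hdx₁⟩ := abs_le.1 hdx
  refine ⟨?_, ?_, ?_⟩ <;> linarith [hξm.1, hξm.2, hζm.1, hζm.2]

lemma le_re_TM (hm1 : 1 ≤ m) (hm2 : m ≤ 2) {R : ℝ} (hR1 : 1 ≤ R) (hR : 40 * R ≤ R ^ m)
    {f : ℝ × ℝ × ℝ → ℝ} (hf : Continuous f) (hf01 : ∀ ξ, f ξ ∈ Icc 0 1)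
    (hf1 : EqOn f 1 (coreBox (R ^ m / 100))) (hf0 : ∀ ξ ∉ supportBox (R ^ m / 100), f ξ = 0)
    {ζ : ℝ × ℝ × ℝ} (hζ : ζ ∈ farBox R (R ^ m / 100)) :
    1 / 720000 ≤ (TM m (fun ξ => (f ξ : ℂ)) ζ).re := by
  -- `1 / 720000 = vol (coreBox L) / (18 R^{2m})`, with `3 R^m` the upper bound of `Re pairM`
  have hM : 0 < R ^ m := by positivity
  have hTM : TM m (fun ξ => (f ξ : ℂ)) ζ = ∫ ξ, (f ξ : ℂ) * ((pairM m ξ ζ) ^ 2)⁻¹ := by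
    simp only [TM, div_eq_mul_inv]
  have hlow : ∀ ξ ∈ supportBox (R ^ m / 100),
      1 / (18 * (R ^ m) ^ 2) ≤ (((pairM m ξ ζ) ^ 2)⁻¹).re := by
    intro ξ hξ
    obtain ⟨hlb, hub, him⟩ := pairM_bounds hm1 hm2 hR1 hR hξ hζ
    refine le_trans ?_ (Complex.one_div_two_mul_re_sq_le_re_inv_sq him)
    have hre : 0 < (pairM m ξ ζ).re := by linarith
    rw [div_le_div_iff₀ (by positivity) (by positivity)]
    nlinarith
  have hup : ∀ ξ ∈ supportBox (R ^ m / 100),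
      ‖((pairM m ξ ζ) ^ 2)⁻¹‖ ≤ 9 / (R ^ m) ^ 2 := by
    intro ξ hξ
    obtain ⟨hlb, -, -⟩ := pairM_bounds hm1 hm2 hR1 hR hξ hζ
    refine (Complex.norm_inv_sq_le (by linarith)).trans ?_
    rw [show 9 / (R ^ m) ^ 2 = ((R ^ m / 3) ^ 2)⁻¹ by field_simp; norm_num]
    gcongr
  have hvol : volume (supportBox (R ^ m / 100)) ≠ ⊤ := by
    rw [volume_supportBox (by positivity)]
    exact ENNReal.ofReal_ne_top
  have key := mul_measureReal_le_re_integral_ofReal_mul (measurableSet_supportBox _) hvol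
    (measurableSet_coreBox _) (coreBox_subset_supportBox (by positivity)) hf.measurable
    ((measurable_pairM_left ζ).pow_const 2).inv hf01 hf1 hf0 (by positivity) hlow hup
  rw [hTM]
  refine le_trans (le_of_eq ?_) key
  rw [measureReal_coreBox (by positivity)]
  field_simp
  norm_num

end Pairing

/-- For every `1 < m ≤ 2` and every `1 < p < ∞`, the model operator `T`
of the unbounded domain `U_m` admits no restricted `Lᵖ` bound: there is no `A > 0` such
that `(∫_S |T g|ᵖ)^{1/p} ≤ A (∫ |g|ᵖ)^{1/p}` for all compactly supported continuous `g`
and all Borel sets `S` at positive distance from the support of `g`. -/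
theorem statement15 (m : ℝ) (hm1 : 1 < m) (hm2 : m ≤ 2) :
    ∀ p : ℝ, 1 < p →
      ¬ ∃ A : ℝ, 0 < A ∧
        ∀ g : ℝ × ℝ × ℝ → ℂ, Continuous g → HasCompactSupport g →
          ∀ S : Set (ℝ × ℝ × ℝ), MeasurableSet S →
            (∃ δ : ℝ, 0 < δ ∧ ∀ ζ ∈ S, ∀ ξ ∈ tsupport g, δ ≤ dist ζ ξ) →
            ∫⁻ ζ in S, (‖TM m g ζ‖₊ : ENNReal) ^ p
              ≤ ENNReal.ofReal A ^ p * ∫⁻ ξ, (‖g ξ‖₊ : ENNReal) ^ p := by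
  rintro p hp ⟨A, hA, hbound⟩
  set c : ℝ := 1 / 720000
  obtain ⟨R, hR40, hR2, hRA⟩ : ∃ R : ℝ, 40 ≤ R ^ (m - 1) ∧ 2 ≤ R ∧ 2 * (A / c) ^ p < R :=
    (((tendsto_rpow_atTop (sub_pos.2 hm1)).eventually_ge_atTop 40).and
      ((eventually_ge_atTop 2).and (eventually_gt_atTop _))).exists
  have hR : 40 * R ≤ R ^ m := by
    rwa [Real.rpow_sub_one (by positivity), le_div_iff₀ (by positivity)] at hR40
  set L := R ^ m / 100
  have hL : 0 < L := by positivity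
  obtain ⟨f, hfc, hf1, hf0, hf01⟩ := exists_plateau hL
  set g : ℝ × ℝ × ℝ → ℂ := fun ξ => f ξ
  have hg0 : ∀ ξ ∉ supportBox L, g ξ = 0 := fun ξ hξ => by simp [g, hf0 ξ hξ]
  have hsupp : tsupport g ⊆ supportBox L :=
    closure_minimal (Function.support_subset_iff'.2 hg0) (isCompact_supportBox L).isClosed
  have hTg := hbound g (continuous_ofReal.comp hfc) (.intro (isCompact_supportBox L) hg0) _
    (measurableSet_farBox R L)
    ⟨1, one_pos, fun ζ hζ ξ hξ => one_le_dist_of_mem_farBox hR2 hζ (hsupp hξ)⟩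
  have hlower := ofReal_rpow_mul_le_setLIntegral_nnnorm_rpow (μ := volume) (c := c) (p := p)
    (measurableSet_farBox R L) (by linarith) fun ζ hζ =>
      (le_re_TM hm1.le hm2 (by linarith) hR hfc hf01 hf1 hf0 hζ).trans (Complex.re_le_norm _)
  have hupper := lintegral_nnnorm_rpow_le_measure (μ := volume) (p := p)
    (measurableSet_supportBox L) (by linarith)
    (fun ξ => by rw [Complex.norm_real, Real.norm_of_nonneg (hf01 ξ).1]; exact (hf01 ξ).2) hg0
  have hcomp : c ^ p * (R * L * L) ≤ A ^ p * (2 * L * L) := by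
    have h := hlower.trans (hTg.trans (mul_le_mul_right hupper _))
    rwa [volume_farBox (by positivity) hL.le, volume_supportBox hL.le,
      ENNReal.ofReal_rpow_of_nonneg (by positivity) (by linarith),
      ENNReal.ofReal_rpow_of_nonneg hA.le (by linarith), ← ENNReal.ofReal_mul (by positivity),
      ← ENNReal.ofReal_mul (by positivity), ENNReal.ofReal_le_ofReal_iff (by positivity)] at h
  rw [Real.div_rpow hA.le (by positivity), mul_div_assoc', div_lt_iff₀ (by positivity)] at hRA
  nlinarith [mul_pos hL hL]
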